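/- arXiv:2604.00266 — 2 statements merged into one kernel-verified Lean document; each statement's English description precedes it below -/
import Mathlib

section
/- Assume J ⊆ Jac(B) and J' ⊆ Jac(C). Then the exact sequence of A-modules 0 → J ⊕ J' → A ⋈^{f,g}(J,J') → A/I₀ → 0 splits if and only if I₀ = ker f ∩ ker g. -/
/-!
A splitting is the same as an element `x = (f a + j, g a + j')` of the amalgamation with
`π x = 1` that is annihilated by `I₀`. Then `a ≡ 1 mod I₀`, so both coordinates of `x` lie in
`1 + Jac` and are units; hence `i • x = (f i * x₁, g i * x₂)` vanishes iff `f i = g i = 0`.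
Conversely `x = 1` works as soon as `I₀ ⊆ ker f ∩ ker g`.
-/

open IsLocalRing

variable {A B C : Type} [CommRing A] [CommRing B] [CommRing C]

def BiAmalg (f : A →+* B) (g : A →+* C) (J : Ideal B) (J' : Ideal C) :
    Subring (B × C) where
  carrier := {x | ∃ a : A, ∃ j ∈ J, ∃ j' ∈ J', x = (f a + j, g a + j')}
  zero_mem' := ⟨0, 0, J.zero_mem, 0, J'.zero_mem, by ext <;> simp⟩
  one_mem' := ⟨1, 0, J.zero_mem, 0, J'.zero_mem, by ext <;> simp⟩
  add_mem' := by
    rintro x y ⟨a, j, hj, j', hj', rfl⟩ ⟨b, k, hk, k', hk', rfl⟩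
    exact ⟨a + b, j + k, J.add_mem hj hk, j' + k', J'.add_mem hj' hk', by
      simp only [Prod.mk_add_mk, map_add, Prod.mk.injEq]
      constructor <;> ring⟩
  neg_mem' := by
    rintro x ⟨a, j, hj, j', hj', rfl⟩
    exact ⟨-a, -j, J.neg_mem hj, -j', J'.neg_mem hj', by
      simp only [Prod.neg_mk, map_neg, Prod.mk.injEq]
      constructor <;> ring⟩
  mul_mem' := by
    rintro x y ⟨a, j, hj, j', hj', rfl⟩ ⟨b, k, hk, k', hk', rfl⟩
    exact ⟨a * b, f a * k + j * f b + j * k,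
      J.add_mem (J.add_mem (J.mul_mem_left _ hk) (J.mul_mem_right _ hj)) (J.mul_mem_right _ hj),
      g a * k' + j' * g b + j' * k',
      J'.add_mem (J'.add_mem (J'.mul_mem_left _ hk') (J'.mul_mem_right _ hj'))
        (J'.mul_mem_right _ hj'), by
      simp only [Prod.mk_mul_mk, map_mul, Prod.mk.injEq]
      constructor <;> ring⟩

theorem BiAmalg.mem_mk (f : A →+* B) (g : A →+* C) (J : Ideal B) (J' : Ideal C)
    (a : A) {j : B} (hj : j ∈ J) {j' : C} (hj' : j' ∈ J') :
    (f a + j, g a + j') ∈ BiAmalg f g J J' :=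
  ⟨a, j, hj, j', hj', rfl⟩

def BiAmalg.incl (f : A →+* B) (g : A →+* C) (J : Ideal B) (J' : Ideal C) :
    A →+* BiAmalg f g J J' where
  toFun a := ⟨(f a, g a), a, 0, J.zero_mem, 0, J'.zero_mem, by simp⟩
  map_one' := Subtype.ext (by simp)
  map_mul' x y := Subtype.ext (by simp [Prod.mk_mul_mk])
  map_zero' := Subtype.ext (by simp)
  map_add' x y := Subtype.ext (by simp [Prod.mk_add_mk])

instance BiAmalg.moduleA (f : A →+* B) (g : A →+* C) (J : Ideal B) (J' : Ideal C) :
    Module A (BiAmalg f g J J') :=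
  Module.compHom _ (BiAmalg.incl f g J J')

/-- The natural embedding `J ⊕ J' → A ⋈^{f,g} (J, J')`, `(j, j') ↦ (j, j')`. -/
def BiAmalg.emb (f : A →+* B) (g : A →+* C) (J : Ideal B) (J' : Ideal C) :
    J × J' → BiAmalg f g J J' :=
  fun p => ⟨((p.1 : B), (p.2 : C)), 0, p.1, p.1.2, p.2, p.2.2, by simp⟩

theorem exists_comp_eq_id_iff_exists_annihilated {R M : Type*} [CommRing R] [AddCommGroup M]
    [Module R M] (I : Ideal R) (π : M →ₗ[R] R ⧸ I) :
    (∃ σ : R ⧸ I →ₗ[R] M, π ∘ₗ σ = LinearMap.id) ↔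
      ∃ m : M, π m = 1 ∧ ∀ i ∈ I, i • m = 0 := by
  constructor
  · rintro ⟨σ, hσ⟩
    refine ⟨σ 1, LinearMap.congr_fun hσ 1, fun i hi => ?_⟩
    rw [← map_smul, Algebra.smul_def, mul_one, Ideal.Quotient.algebraMap_eq,
      Ideal.Quotient.eq_zero_iff_mem.2 hi, map_zero]
  · rintro ⟨m, hπm, hann⟩
    refine ⟨I.liftQ (LinearMap.toSpanSingleton R M m) hann, ?_⟩
    ext
    change π (LinearMap.toSpanSingleton R M m 1) = 1
    rw [LinearMap.toSpanSingleton_apply_one, hπm]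

namespace BiAmalg

variable {f : A →+* B} {g : A →+* C} {J : Ideal B} {J' : Ideal C}

theorem coe_smul (a : A) (x : BiAmalg f g J J') :
    ((a • x : BiAmalg f g J J') : B × C) = (f a * (x : B × C).1, g a * (x : B × C).2) :=
  rfl

theorem smul_eq_zero_iff_of_isUnit {x : BiAmalg f g J J'} (hx₁ : IsUnit (x : B × C).1)
    (hx₂ : IsUnit (x : B × C).2) (i : A) :
    i • x = 0 ↔ i ∈ RingHom.ker f ⊓ RingHom.ker g := by
  rw [← Subring.coe_eq_zero_iff, coe_smul, Prod.mk_eq_zero, hx₁.mul_left_eq_zero,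
    hx₂.mul_left_eq_zero]
  rfl

end BiAmalg

/-- If `J ⊆ Jac(B)` and `J' ⊆ Jac(C)`, then the exact sequence of `A`-modules
`0 → J ⊕ J' → A ⋈^{f,g} (J, J') → A/I₀ → 0` splits if and only if `I₀ = ker f ∩ ker g`. -/
theorem biAmalg_splits_iff (f : A →+* B) (g : A →+* C) (J : Ideal B) (J' : Ideal C)
    (hI : J.comap f = J'.comap g)
    (hJ : J ≤ (⊥ : Ideal B).jacobson) (hJ' : J' ≤ (⊥ : Ideal C).jacobson)
    (π : BiAmalg f g J J' →ₗ[A] A ⧸ J.comap f)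
    (hπ : ∀ (a : A) (j : B) (hj : j ∈ J) (j' : C) (hj' : j' ∈ J'),
      π ⟨(f a + j, g a + j'), BiAmalg.mem_mk f g J J' a hj hj'⟩ =
        Ideal.Quotient.mk (J.comap f) a) :
    (∃ σ : A ⧸ J.comap f →ₗ[A] BiAmalg f g J J', π ∘ₗ σ = LinearMap.id) ↔
      J.comap f = RingHom.ker f ⊓ RingHom.ker g := by
  rw [exists_comp_eq_id_iff_exists_annihilated]
  constructor
  · rintro ⟨⟨_, a, j, hj, j', hj', rfl⟩, hπx, hann⟩
    have ha : a - 1 ∈ J.comap f := by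
      rw [← Ideal.Quotient.eq, map_one, ← hπ a j hj j' hj', ← hπx]
    have hu : IsUnit (f a + j) := Ideal.isUnit_of_sub_one_mem_jacobson_bot _ <| hJ <| by
      simpa [add_sub_right_comm] using J.add_mem ha hj
    have ha' : a - 1 ∈ J'.comap g := hI ▸ ha
    have hu' : IsUnit (g a + j') := Ideal.isUnit_of_sub_one_mem_jacobson_bot _ <| hJ' <| by
      simpa [add_sub_right_comm] using J'.add_mem ha' hj'
    exact le_antisymm (fun i hi => (BiAmalg.smul_eq_zero_iff_of_isUnit hu hu' i).1 (hann i hi))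
      (inf_le_left.trans (Ideal.comap_mono bot_le))
  · intro h
    refine ⟨1, ?_, fun i hi =>
      (BiAmalg.smul_eq_zero_iff_of_isUnit isUnit_one isUnit_one i).2 (h ▸ hi)⟩
    rw [← map_one (Ideal.Quotient.mk _), ← hπ 1 0 J.zero_mem 0 J'.zero_mem]
    congr
    exact Subtype.ext (by simp only [map_one, add_zero]; rfl)
end

section
/- Let (A, m) be a Noetherian local ring and M a finitely generated A-module. Then the Krull dimension of the idealization A ⋉ M equals the Krull dimension of A, and depth A ⋉ M = min(depth A, depth M). -/
/-!
The kernel of the projection `A ⋉ M → A` is `0 ⋉ M`, an ideal of square zero, so it lies in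
every prime and `Spec (A ⋉ M) ≅ Spec A`. As an `A`-module `A ⋉ M` is `A ⊕ M`, and local
cohomology is an additive functor, so `H^i_𝔪(A ⋉ M) ≅ H^i_𝔪(A) ⊕ H^i_𝔪(M)`: the first
non-vanishing index for `A ⋉ M` is the smaller of those for `A` and `M`.
-/

open IsLocalRing

noncomputable def lcDepth (R M : Type) [CommRing R] [IsLocalRing R]
    [AddCommGroup M] [Module R M] : ℕ∞ :=
  sInf {n : ℕ∞ | ∃ i : ℕ, n = (i : ℕ∞) ∧
    Nontrivial ((localCohomology (maximalIdeal R) i).obj (ModuleCat.of R M))}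

theorem ringKrullDim_eq_of_surjective_of_ker_le_nilradical {R S : Type*} [CommRing R]
    [CommRing S] (f : R →+* S) (hf : Function.Surjective f)
    (hker : RingHom.ker f ≤ nilradical R) :
    ringKrullDim S = ringKrullDim R := by
  rw [← (RingHom.quotientKerEquivOfSurjective hf).ringKrullDim, ringKrullDim_quotient,
    (PrimeSpectrum.zeroLocus_eq_univ_iff _).2 hker]
  exact Order.krullDim_eq_of_orderIso OrderIso.Set.univ

namespace TrivSqZeroExt

variable (R M : Type*) [CommRing R] [AddCommGroup M] [Module R M] [Module Rᵐᵒᵖ M]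
  [IsCentralScalar R M]

theorem kerIdeal_le_nilradical : kerIdeal R M ≤ nilradical (TrivSqZeroExt R M) := by
  rw [nilradical, Ideal.zero_eq_bot, ← kerIdeal_sq]
  exact fun x hx => ⟨2, Ideal.pow_mem_pow hx 2⟩

theorem ringKrullDim_eq : ringKrullDim (TrivSqZeroExt R M) = ringKrullDim R :=
  (ringKrullDim_eq_of_surjective_of_ker_le_nilradical (fstHom R R M).toRingHom
    (fun r => ⟨inl r, rfl⟩) (kerIdeal_le_nilradical R M)).symm

end TrivSqZeroExt

namespace CategoryTheory

instance linearYoneda_additive (R : Type*) [Ring R] (C : Type*) [Category C] [Preadditive C]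
    [Linear R C] : (linearYoneda R C).Additive where
  map_add {_ _ f g} := by
    ext Z φ
    exact Preadditive.comp_add _ _ _ _ _ _

instance Functor.flip_additive {J C D : Type*} [Category J] [Category C] [Category D]
    [Preadditive C] [Preadditive D] (F : J ⥤ C ⥤ D) [∀ j, (F.obj j).Additive] :
    F.flip.Additive where
  map_add {_ _ _ _} := by
    ext
    simp

namespace NatTrans

variable {C D : Type*} [Category C] [Category D] [Preadditive D]

lemma rightOp_add {F G : Cᵒᵖ ⥤ D} (α β : F ⟶ G) : (α + β).rightOp = α.rightOp + β.rightOp := by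
  ext
  simp [NatTrans.rightOp, op_add]

lemma leftOp_add {F G : C ⥤ Dᵒᵖ} (α β : F ⟶ G) : (α + β).leftOp = α.leftOp + β.leftOp := by
  ext
  simp [NatTrans.leftOp, unop_add]

variable [Preadditive C] {F G : C ⥤ D} [F.Additive] [G.Additive]

lemma mapHomologicalComplex_add {ι : Type*} (α β : F ⟶ G) (c : ComplexShape ι) :
    mapHomologicalComplex (α + β) c = mapHomologicalComplex α c + mapHomologicalComplex β c := by
  ext
  simp only [mapHomologicalComplex_app_f, app_add, HomologicalComplex.add_f_apply]
  rfl

lemma mapHomotopyCategory_add {ι : Type*} (α β : F ⟶ G) (c : ComplexShape ι) :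
    mapHomotopyCategory (α + β) c = mapHomotopyCategory α c + mapHomotopyCategory β c := by
  ext
  simp only [mapHomotopyCategory, mapHomologicalComplex_add, app_add, Functor.map_add]
  rfl

end NatTrans

lemma NatTrans.leftDerived_add {C D : Type*} [Category C] [Category D] [Abelian C] [Abelian D]
    [HasProjectiveResolutions C] {F G : C ⥤ D} [F.Additive] [G.Additive]
    (α β : F ⟶ G) (n : ℕ) :
    NatTrans.leftDerived (α + β) n = NatTrans.leftDerived α n + NatTrans.leftDerived β n := by
  ext
  simp only [leftDerived, leftDerivedToHomotopyCategory, mapHomotopyCategory_add]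
  exact (HomotopyCategory.homologyFunctor D (ComplexShape.down ℕ) n).map_add

instance Ext_obj_additive (R : Type*) [Ring R] (C : Type*) [Category C] [Abelian C]
    [Linear R C] [EnoughProjectives C] (n : ℕ) (X : Cᵒᵖ) :
    ((Ext R C n).obj X).Additive where
  map_add {_ _ f g} := by
    -- `Ext` derives `linearYoneda` in its first variable, so maps in the second act by
    -- `NatTrans.leftDerived`.
    show (NatTrans.leftOp (NatTrans.leftDerived
        (NatTrans.rightOp ((linearYoneda R C).map (f + g))) n)).app X = _
    rw [Functor.map_add, NatTrans.rightOp_add, NatTrans.leftDerived_add, NatTrans.leftOp_add]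
    rfl

end CategoryTheory

open CategoryTheory Limits

instance localCohomology_additive {R : Type*} [CommRing R] (J : Ideal R) (i : ℕ) :
    (localCohomology J i).Additive :=
  let D := localCohomology.diagram (localCohomology.idealPowersDiagram J) i
  have (d : ℕᵒᵖᵒᵖ) : (D.obj d).Additive := Ext_obj_additive _ _ _ _
  Functor.additive_of_iso (colimitIsoFlipCompColim D).symm

theorem nontrivial_prod_iff {α β : Type*} [Nonempty α] [Nonempty β] :
    Nontrivial (α × β) ↔ Nontrivial α ∨ Nontrivial β := by
  refine ⟨fun h => ?_, fun h => h.elim (fun _ => inferInstance) (fun _ => inferInstance)⟩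
  by_contra! ⟨_, _⟩
  exact not_nontrivial (α × β) h

universe v w in
theorem CategoryTheory.Functor.nontrivial_obj_prod_iff {R S : Type*} [Ring R] [Ring S]
    (F : ModuleCat.{v} R ⥤ ModuleCat.{w} S) [F.Additive] (X Y : ModuleCat R) :
    Nontrivial (F.obj (ModuleCat.of R (X × Y))) ↔
      Nontrivial (F.obj X) ∨ Nontrivial (F.obj Y) := by
  have := preservesBinaryBiproducts_of_preservesBiproducts F
  let e : F.obj (ModuleCat.of R (X × Y)) ≅ ModuleCat.of S (F.obj X × F.obj Y) :=
    F.mapIso (ModuleCat.biprodIsoProd X Y).symm ≪≫ F.mapBiprod X Y ≪≫ ModuleCat.biprodIsoProd _ _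
  rw [e.toLinearEquiv.toEquiv.nontrivial_congr]
  exact nontrivial_prod_iff

theorem lcDepth_prod (R X Y : Type) [CommRing R] [IsLocalRing R] [AddCommGroup X] [Module R X]
    [AddCommGroup Y] [Module R Y] : lcDepth R (X × Y) = min (lcDepth R X) (lcDepth R Y) := by
  simp only [lcDepth, ← sInf_union, ← Set.ofPred_or,
    Functor.nontrivial_obj_prod_iff _ (ModuleCat.of R X) (ModuleCat.of R Y)]
  simp [and_or_left, exists_or]

theorem trivSqZeroExt_ringKrullDim_and_lcDepth_general (A M : Type) [CommRing A]
    [IsLocalRing A] [AddCommGroup M] [Module A M] :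
    letI : Module Aᵐᵒᵖ M := Module.compHom M ((RingHom.id A).fromOpposite mul_comm)
    haveI : IsCentralScalar A M := ⟨fun _ _ => rfl⟩
    ringKrullDim (TrivSqZeroExt A M) = ringKrullDim A ∧
    lcDepth A (TrivSqZeroExt A M) = min (lcDepth A A) (lcDepth A M) :=
  letI : Module Aᵐᵒᵖ M := Module.compHom M ((RingHom.id A).fromOpposite mul_comm)
  haveI : IsCentralScalar A M := ⟨fun _ _ => rfl⟩
  -- `A ⋉ M` is `A × M` as an `A`-module, definitionally.
  ⟨TrivSqZeroExt.ringKrullDim_eq A M, lcDepth_prod A A M⟩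

/-- For a Noetherian local ring `(A, 𝔪)` and a finitely generated `A`-module
`M`, the idealization `A ⋉ M` (trivial square-zero extension) satisfies
`dim (A ⋉ M) = dim A` and `depth (A ⋉ M) = min (depth A) (depth M)`. -/
theorem trivSqZeroExt_ringKrullDim_and_lcDepth (A M : Type) [CommRing A]
    [IsNoetherianRing A] [IsLocalRing A] [AddCommGroup M] [Module A M]
    [Module.Finite A M] :
    letI : Module Aᵐᵒᵖ M := Module.compHom M ((RingHom.id A).fromOpposite mul_comm)
    haveI : IsCentralScalar A M := ⟨fun _ _ => rfl⟩
    ringKrullDim (TrivSqZeroExt A M) = ringKrullDim A ∧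
    lcDepth A (TrivSqZeroExt A M) = min (lcDepth A A) (lcDepth A M) :=
  trivSqZeroExt_ringKrullDim_and_lcDepth_general A M
end
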